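/- arXiv:1803.05687 — 2 statements merged into one kernel-verified Lean document; each statement's English description precedes it below -/
import Mathlib

section
/- (Simon's inequality, case p ≥ 2) For every real p ≥ 2 there exists a constant c_p > 0 such that for all vectors x, y ∈ ℝ^N, |x - y|^p ≤ c_p · (|x|^{p-2}x - |y|^{p-2}y) · (x - y). -/
open Real

theorem simon_inequality_p_ge_two (N : ℕ) (p : ℝ) (hp : 2 ≤ p) :
    ∃ c : ℝ, 0 < c ∧ ∀ x y : EuclideanSpace ℝ (Fin N),
      ‖x - y‖ ^ p ≤
        c * (inner ℝ ((‖x‖ ^ (p - 2)) • x - (‖y‖ ^ (p - 2)) • y) (x - y) : ℝ) := by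
  refine ⟨2 ^ (p - 1), rpow_pos_of_pos two_pos _, fun x y => ?_⟩
  set a := ‖x‖ with ha
  set b := ‖y‖ with hb
  set d := ‖x - y‖ with hd
  have ha0 : 0 ≤ a := norm_nonneg _
  have hb0 : 0 ≤ b := norm_nonneg _
  have hd0 : 0 ≤ d := norm_nonneg _
  have hexp : (0:ℝ) ≤ p - 2 := by linarith
  set α := a ^ (p - 2) with hα
  set β := b ^ (p - 2) with hβ
  have hα0 : 0 ≤ α := rpow_nonneg ha0 _
  have hβ0 : 0 ≤ β := rpow_nonneg hb0 _
  have hI : (inner ℝ ((α) • x - (β) • y) (x - y) : ℝ)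
      = α * a ^ 2 + β * b ^ 2 - (α + β) * (inner ℝ x y : ℝ) := by
    simp only [inner_sub_left, inner_sub_right, real_inner_smul_left,
      real_inner_self_eq_norm_sq, real_inner_comm y x]
    ring
  have hdsq : d ^ 2 = a ^ 2 - 2 * (inner ℝ x y : ℝ) + b ^ 2 := by
    rw [ha, hb, hd]; exact norm_sub_sq_real x y
  rcases eq_or_lt_of_le hd0 with hdz | hdpos
  · -- d = 0, so x = y and both sides vanish
    have hxy : x = y := by
      have : ‖x - y‖ = 0 := hdz.symm
      rwa [norm_sub_eq_zero_iff] at this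
    subst hxy
    have : (0:ℝ) ^ p = 0 := zero_rpow (by linarith)
    rw [← hdz, this, hI]
    have hz : α * a ^ 2 + β * b ^ 2 - (α + β) * (inner ℝ x x : ℝ) = 0 := by
      rw [real_inner_self_eq_norm_sq, ← ha]
      have hab : b = a := rfl
      have hαβ : β = α := by rw [hα, hβ, hab]
      rw [hαβ, hab]; ring
    rw [hz, mul_zero]
  · -- main case d > 0
    have key1 : 0 ≤ (α - β) * (a ^ 2 - b ^ 2) := by
      rcases le_total a b with h | h
      · have h1 : α ≤ β := rpow_le_rpow ha0 h hexp
        have h2 : a ^ 2 ≤ b ^ 2 := by nlinarith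
        nlinarith
      · have h1 : β ≤ α := rpow_le_rpow hb0 h hexp
        have h2 : b ^ 2 ≤ a ^ 2 := by nlinarith
        nlinarith
    have hdab : d ≤ a + b := by
      rw [hd, ha, hb]; exact norm_sub_le x y
    have key2 : (d / 2) ^ (p - 2) ≤ α + β := by
      rcases le_total a b with h | h
      · have hdb : d / 2 ≤ b := by linarith
        have := rpow_le_rpow (by positivity) hdb hexp
        linarith
      · have hda : d / 2 ≤ a := by linarith
        have := rpow_le_rpow (by positivity) hda hexp
        linarith
    -- inner ≥ (α+β) d²/2
    have hI2 : (α + β) * d ^ 2 / 2 ≤ (inner ℝ ((α) • x - (β) • y) (x - y) : ℝ) := by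
      rw [hI]
      have ht : (inner ℝ x y : ℝ) = (a ^ 2 + b ^ 2 - d ^ 2) / 2 := by linarith
      rw [ht]; nlinarith
    have hstep : (d / 2) ^ (p - 2) * d ^ 2 / 2 ≤ (α + β) * d ^ 2 / 2 := by
      have : 0 ≤ d ^ 2 := sq_nonneg d
      nlinarith
    have hrw : (2:ℝ) ^ (p - 1) * ((d / 2) ^ (p - 2) * d ^ 2 / 2) = d ^ p := by
      rw [div_rpow hd0 (by norm_num : (0:ℝ) ≤ 2)]
      have h1 : d ^ (p - 2) * d ^ 2 = d ^ p := by
        rw [← rpow_natCast d 2, ← rpow_add hdpos]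
        norm_num
      have h2 : (2:ℝ) ^ (p - 1) = 2 ^ (p - 2) * 2 := by
        rw [show p - 1 = (p - 2) + 1 by ring, rpow_add two_pos, rpow_one]
      have h2pos : (0:ℝ) < 2 ^ (p - 2) := rpow_pos_of_pos two_pos _
      rw [h2]
      have hne : (2:ℝ) ^ (p - 2) * 2 ≠ 0 := by positivity
      have hre : d ^ (p - 2) / 2 ^ (p - 2) * d ^ 2 / 2
          = (d ^ (p - 2) * d ^ 2) / (2 ^ (p - 2) * 2) := by ring
      rw [hre, h1, mul_div_cancel₀ _ hne]
    calc d ^ p = 2 ^ (p - 1) * ((d / 2) ^ (p - 2) * d ^ 2 / 2) := hrw.symm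
      _ ≤ 2 ^ (p - 1) * ((α + β) * d ^ 2 / 2) := by
          apply mul_le_mul_of_nonneg_left hstep (le_of_lt (rpow_pos_of_pos two_pos _))
      _ ≤ 2 ^ (p - 1) * (inner ℝ ((α) • x - (β) • y) (x - y) : ℝ) := by
          apply mul_le_mul_of_nonneg_left hI2 (le_of_lt (rpow_pos_of_pos two_pos _))
end

section
/- (Simon's inequality, case 1 < p < 2) For every real p with 1 < p < 2 there exists a constant C_p > 0 such that for all vectors x, y ∈ ℝ^N not both zero, |x - y|^p ≤ C_p · [(|x|^{p-2}x - |y|^{p-2}y)·(x - y)]^{p/2} · (|x|^p + |y|^p)^{(2-p)/2}. -/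
open Real

-- x^(s+1) = x^s * x, valid also at x = 0 when s ≠ 0, s+1 ≠ 0
lemma rpow_succ' {a : ℝ} (ha : 0 ≤ a) {s : ℝ} (hs : s ≠ 0) (hs1 : s + 1 ≠ 0) :
    a ^ (s + 1) = a ^ s * a := by
  rcases eq_or_lt_of_le ha with h | h
  · rw [← h, Real.zero_rpow hs1, Real.zero_rpow hs, zero_mul]
  · exact Real.rpow_add_one (ne_of_gt h) s

-- concavity: q (a-b) (a+b)^(q-1) ≤ a^q - b^q for 0 ≤ b ≤ a, 0 < q < 1
lemma lemA {q a b : ℝ} (hq0 : 0 < q) (hq1 : q < 1) (hb : 0 ≤ b) (hab : b ≤ a) :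
    q * (a - b) * (a + b) ^ (q - 1) ≤ a ^ q - b ^ q := by
  rcases eq_or_lt_of_le (hb.trans hab) with h | ha
  · have hb0 : b = 0 := le_antisymm (hab.trans h.symm.le) hb
    rw [← h, hb0]
    simp [Real.zero_rpow (by linarith : q - 1 ≠ (0:ℝ)), Real.zero_rpow (ne_of_gt hq0)]
  · have h1 : b ^ q ≤ a ^ q + q * (a ^ (q - 1)) * (b - a) := by
      have hs : (-1 : ℝ) ≤ b / a - 1 := by
        have : 0 ≤ b / a := div_nonneg hb ha.le
        linarith
      have hber := rpow_one_add_le_one_add_mul_self hs hq0.le hq1.le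
      have h1s : (1 : ℝ) + (b / a - 1) = b / a := by ring
      rw [h1s] at hber
      have h2 : (b / a) ^ q * a ^ q = b ^ q := by
        rw [Real.div_rpow hb ha.le, div_mul_cancel₀]
        exact ne_of_gt (Real.rpow_pos_of_pos ha q)
      have h3 : a ^ (q - 1) = a ^ q / a := by
        rw [Real.rpow_sub ha, Real.rpow_one]
      have hpow : 0 < a ^ q := Real.rpow_pos_of_pos ha q
      calc b ^ q = (b / a) ^ q * a ^ q := h2.symm
        _ ≤ (1 + q * (b / a - 1)) * a ^ q := by
            apply mul_le_mul_of_nonneg_right hber hpow.le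
        _ = a ^ q + q * (a ^ q / a) * (b - a) := by
            field_simp
        _ = a ^ q + q * (a ^ (q - 1)) * (b - a) := by rw [h3]
    have h2 : (a + b) ^ (q - 1) ≤ a ^ (q - 1) :=
      Real.rpow_le_rpow_of_nonpos ha (by linarith) (by linarith)
    have h4 : q * (a - b) * (a + b) ^ (q - 1) ≤ q * (a - b) * a ^ (q - 1) := by
      apply mul_le_mul_of_nonneg_left h2
      have : 0 ≤ a - b := by linarith
      positivity
    nlinarith [h1, h4]

-- symmetric endpoint ineq: (p-1)(a-b)^2 (a+b)^(p-2) ≤ (a^(p-1)-b^(p-1))(a-b)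
lemma lemB {p a b : ℝ} (hp1 : 1 < p) (hp2 : p < 2) (ha : 0 ≤ a) (hb : 0 ≤ b) :
    (p - 1) * (a - b) ^ 2 * (a + b) ^ (p - 2) ≤ (a ^ (p-1) - b ^ (p-1)) * (a - b) := by
  have key : ∀ u v : ℝ, 0 ≤ v → v ≤ u →
      (p - 1) * (u - v) ^ 2 * (u + v) ^ (p - 2) ≤ (u ^ (p-1) - v ^ (p-1)) * (u - v) := by
    intro u v hv huv
    have hA := lemA (by linarith : (0:ℝ) < p - 1) (by linarith : p - 1 < 1) hv huv
    have he : p - 1 - 1 = p - 2 := by ring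
    rw [he] at hA
    have huv' : 0 ≤ u - v := by linarith
    nlinarith [mul_le_mul_of_nonneg_right hA huv']
  rcases le_total b a with h | h
  · exact key a b hb h
  · have := key b a ha h
    rw [add_comm b a] at this
    nlinarith [this]

-- subadditivity of rpow for exponent in (0,1]
lemma lemSub {q a b : ℝ} (hq0 : 0 < q) (hq1 : q ≤ 1) (ha : 0 ≤ a) (hb : 0 ≤ b) :
    (a + b) ^ q ≤ a ^ q + b ^ q := by
  have h := NNReal.rpow_add_le_add_rpow (a.toNNReal) (b.toNNReal) hq0.le hq1
  have h2 := NNReal.coe_le_coe.2 h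
  push_cast at h2
  rwa [Real.coe_toNNReal a ha, Real.coe_toNNReal b hb] at h2

-- main scalar inequality in t
lemma lemI {p a b t : ℝ} (hp1 : 1 < p) (hp2 : p < 2) (ha : 0 ≤ a) (hb : 0 ≤ b)
    (hab : 0 < a + b) (ht1 : -(a * b) ≤ t) (ht2 : t ≤ a * b) :
    (p - 1) * (a ^ 2 + b ^ 2 - 2 * t) * (a + b) ^ (p - 2) ≤
      a ^ (p-2) * a ^ 2 + b ^ (p-2) * b ^ 2 - (a ^ (p-2) + b ^ (p-2)) * t := by
  set K := (a + b) ^ (p - 2) with hK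
  set u := a ^ (p-2) with hu
  set v := b ^ (p-2) with hv
  -- identities: a^(p-1) = u * a, b^(p-1) = v * b
  have hpa : a ^ (p-1) = u * a := by
    have := rpow_succ' ha (s := p - 2) (by linarith) (by intro h; exact absurd h (by norm_num; linarith))
    rw [show p - 2 + 1 = p - 1 by ring] at this
    simpa [hu] using this
  have hpb : b ^ (p-1) = v * b := by
    have := rpow_succ' hb (s := p - 2) (by linarith) (by intro h; exact absurd h (by norm_num; linarith))
    rw [show p - 2 + 1 = p - 1 by ring] at this
    simpa [hv] using this
  -- endpoint 1 (t = a*b): from lemB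
  have hB : (p - 1) * (a - b) ^ 2 * K ≤ (u * a - v * b) * (a - b) := by
    have := lemB hp1 hp2 ha hb
    rwa [hpa, hpb] at this
  -- endpoint 2 (t = -(a*b)): from subadditivity
  have hC : (p - 1) * (a + b) ^ 2 * K ≤ (u * a + v * b) * (a + b) := by
    have hsub : (a + b) ^ (p-1) ≤ a ^ (p-1) + b ^ (p-1) :=
      lemSub (by linarith) (by linarith) ha hb
    have hK2 : (a + b) ^ (2:ℝ) * K = (a + b) ^ (p-1) * (a + b) := by
      rw [hK, ← Real.rpow_add hab, ← Real.rpow_add_one (ne_of_gt hab)]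
      norm_num
    have hnat : (a + b) ^ (2:ℕ) = (a + b) ^ (2:ℝ) := by
      rw [← Real.rpow_natCast (a+b) 2]; norm_num
    have hKpos : 0 < (a + b) ^ (p-1) := Real.rpow_pos_of_pos hab _
    have hstep : (p - 1) * (a + b) ^ (p-1) ≤ a ^ (p-1) + b ^ (p-1) := by
      nlinarith [hKpos]
    calc (p - 1) * (a + b) ^ 2 * K = (p - 1) * ((a + b) ^ (p-1) * (a + b)) := by
          rw [hnat]; rw [mul_assoc, hK2]
      _ ≤ (a ^ (p-1) + b ^ (p-1)) * (a + b) := by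
          nlinarith [hstep, hab]
      _ = (u * a + v * b) * (a + b) := by rw [hpa, hpb]
  -- affine interpolation
  rcases le_or_gt 0 (2 * (p - 1) * K - (u + v)) with hbeta | hbeta
  · nlinarith [mul_nonneg hbeta (by linarith : 0 ≤ t + a * b)]
  · nlinarith [mul_nonneg (by linarith : 0 ≤ (u + v) - 2 * (p-1) * K) (by linarith : 0 ≤ a * b - t)]

theorem simon_inequality_p_lt_two (N : ℕ) (p : ℝ) (hp1 : 1 < p) (hp2 : p < 2) :
    ∃ C : ℝ, 0 < C ∧ ∀ x y : EuclideanSpace ℝ (Fin N), (x ≠ 0 ∨ y ≠ 0) →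
      ‖x - y‖ ^ p ≤
        C * (inner ℝ ((‖x‖ ^ (p - 2)) • x - (‖y‖ ^ (p - 2)) • y) (x - y) : ℝ) ^ (p / 2) *
          (‖x‖ ^ p + ‖y‖ ^ p) ^ ((2 - p) / 2) := by
  have hpinv : (0:ℝ) < (p-1)⁻¹ := by
    have : (0:ℝ) < p - 1 := by linarith
    positivity
  refine ⟨((p-1)⁻¹) ^ (p/2) * (2:ℝ) ^ (p * (2 - p) / 2),
    mul_pos (Real.rpow_pos_of_pos hpinv _) (Real.rpow_pos_of_pos (by norm_num) _), ?_⟩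
  intro x y hxy
  set a := ‖x‖ with hadef
  set b := ‖y‖ with hbdef
  have ha : 0 ≤ a := norm_nonneg x
  have hb : 0 ≤ b := norm_nonneg y
  have hab : 0 < a + b := by
    rcases hxy with h | h
    · have : 0 < a := norm_pos_iff.2 h
      linarith
    · have : 0 < b := norm_pos_iff.2 h
      linarith
  set t := (inner ℝ x y : ℝ) with htdef
  have ht : |t| ≤ a * b := abs_real_inner_le_norm x y
  set u := a ^ (p-2) with hu
  set v := b ^ (p-2) with hv
  set I := (inner ℝ ((a ^ (p - 2)) • x - (b ^ (p - 2)) • y) (x - y) : ℝ) with hI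
  have hIeq : I = u * a ^ 2 + v * b ^ 2 - (u + v) * t := by
    rw [hI]
    simp only [inner_sub_left, inner_sub_right, real_inner_smul_left,
      real_inner_self_eq_norm_sq]
    have hyx : (inner ℝ y x : ℝ) = t := by rw [htdef, real_inner_comm]
    have hxy' : (inner ℝ x y : ℝ) = t := htdef.symm
    rw [hyx, hxy', ← hadef, ← hbdef, ← hu, ← hv]
    ring
  have hlow : (p - 1) * (a ^ 2 + b ^ 2 - 2 * t) * (a + b) ^ (p - 2) ≤ I := by
    rw [hIeq]
    have := lemI hp1 hp2 ha hb hab (neg_le_of_abs_le ht) (le_of_abs_le ht)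
    rw [← hu, ← hv] at this
    linarith [this]
  have hd : ‖x - y‖ ^ (2:ℕ) = a ^ 2 + b ^ 2 - 2 * t := by
    rw [norm_sub_sq_real, ← hadef, ← hbdef, ← htdef]; ring
  have hdnn : 0 ≤ a ^ 2 + b ^ 2 - 2 * t := by rw [← hd]; positivity
  have hKpos : 0 < (a + b) ^ (p - 2) := Real.rpow_pos_of_pos hab _
  have hI0 : 0 ≤ I :=
    le_trans (mul_nonneg (mul_nonneg (by linarith : (0:ℝ) ≤ p - 1) hdnn) hKpos.le) hlow
  -- step 1: a²+b²-2t ≤ (p-1)⁻¹ * I * (a+b)^(2-p)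
  have hK2 : (a + b) ^ (p - 2) * (a + b) ^ (2 - p) = 1 := by
    rw [← Real.rpow_add hab]; norm_num
  have hKpos2 : 0 < (a + b) ^ (2 - p) := Real.rpow_pos_of_pos hab _
  have hstep1 : a ^ 2 + b ^ 2 - 2 * t ≤ (p-1)⁻¹ * I * (a + b) ^ (2 - p) := by
    have hmul := mul_le_mul_of_nonneg_right hlow hKpos2.le
    rw [mul_assoc, mul_assoc] at hmul
    rw [hK2] at hmul
    have hp1' : (0:ℝ) < p - 1 := by linarith
    rw [mul_one] at hmul
    calc a ^ 2 + b ^ 2 - 2 * t = (p-1)⁻¹ * ((p - 1) * (a ^ 2 + b ^ 2 - 2 * t)) := by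
          field_simp
      _ ≤ (p-1)⁻¹ * (I * (a + b) ^ (2 - p)) := by
          apply mul_le_mul_of_nonneg_left hmul (by positivity)
      _ = (p-1)⁻¹ * I * (a + b) ^ (2 - p) := by ring
  -- ‖x-y‖^p = (a²+b²-2t)^(p/2)
  have hnormp : ‖x - y‖ ^ p = (a ^ 2 + b ^ 2 - 2 * t) ^ (p/2) := by
    rw [← hd]
    rw [← Real.rpow_natCast (‖x - y‖) 2, ← Real.rpow_mul (norm_nonneg _)]
    congr 1
    push_cast
    ring
  rw [hnormp]
  have hmono : (a ^ 2 + b ^ 2 - 2 * t) ^ (p/2) ≤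
      ((p-1)⁻¹ * I * (a + b) ^ (2 - p)) ^ (p/2) :=
    Real.rpow_le_rpow hdnn hstep1 (by positivity)
  have hsplit : ((p-1)⁻¹ * I * (a + b) ^ (2 - p)) ^ (p/2) =
      ((p-1)⁻¹) ^ (p/2) * I ^ (p/2) * ((a + b) ^ (2 - p)) ^ (p/2) := by
    rw [Real.mul_rpow (mul_nonneg hpinv.le hI0) hKpos2.le, Real.mul_rpow hpinv.le hI0]
  have hexp : ((a + b) ^ (2 - p)) ^ (p/2) = ((a + b) ^ p) ^ ((2 - p)/2) := by
    rw [← Real.rpow_mul hab.le, show (2-p)*(p/2) = p*((2-p)/2) by ring,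
      Real.rpow_mul hab.le]
  have hsum : (a + b) ^ p ≤ (2:ℝ) ^ p * (a ^ p + b ^ p) := by
    have h2 : ∀ c d : ℝ, 0 ≤ c → 0 ≤ d → c ≤ d →
        (c + d) ^ p ≤ (2:ℝ) ^ p * (c ^ p + d ^ p) := by
      intro c d hc hd hcd
      calc (c + d) ^ p ≤ (2 * d) ^ p :=
            Real.rpow_le_rpow (by linarith) (by linarith) (by linarith)
        _ = (2:ℝ) ^ p * d ^ p := Real.mul_rpow (by norm_num) hd
        _ ≤ (2:ℝ) ^ p * (c ^ p + d ^ p) := by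
            have hcp : 0 ≤ c ^ p := Real.rpow_nonneg hc p
            have h2p : (0:ℝ) ≤ (2:ℝ) ^ p := Real.rpow_nonneg (by norm_num) p
            nlinarith
    rcases le_total a b with h | h
    · exact h2 a b ha hb h
    · have := h2 b a hb ha h
      rw [add_comm b a, add_comm (b ^ p) (a ^ p)] at this
      exact this
  have hfac : ((a + b) ^ p) ^ ((2 - p)/2) ≤
      (2:ℝ) ^ (p * (2 - p) / 2) * (a ^ p + b ^ p) ^ ((2 - p)/2) := by
    calc ((a + b) ^ p) ^ ((2 - p)/2) ≤ ((2:ℝ) ^ p * (a ^ p + b ^ p)) ^ ((2 - p)/2) :=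
          Real.rpow_le_rpow (Real.rpow_nonneg hab.le p) hsum (by linarith)
      _ = ((2:ℝ) ^ p) ^ ((2 - p)/2) * (a ^ p + b ^ p) ^ ((2 - p)/2) :=
          Real.mul_rpow (Real.rpow_nonneg (by norm_num) p)
            (add_nonneg (Real.rpow_nonneg ha p) (Real.rpow_nonneg hb p))
      _ = (2:ℝ) ^ (p * (2 - p) / 2) * (a ^ p + b ^ p) ^ ((2 - p)/2) := by
          rw [← Real.rpow_mul (by norm_num : (0:ℝ) ≤ 2),
            show p * ((2 - p)/2) = p * (2 - p) / 2 by ring]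
  have hIp : 0 ≤ I ^ (p/2) := Real.rpow_nonneg hI0 _
  have hC1 : 0 ≤ ((p-1)⁻¹) ^ (p/2) := Real.rpow_nonneg hpinv.le _
  calc (a ^ 2 + b ^ 2 - 2 * t) ^ (p/2)
      ≤ ((p-1)⁻¹ * I * (a + b) ^ (2 - p)) ^ (p/2) := hmono
    _ = ((p-1)⁻¹) ^ (p/2) * I ^ (p/2) * (((a + b) ^ p) ^ ((2 - p)/2)) := by
        rw [hsplit, hexp]
    _ ≤ ((p-1)⁻¹) ^ (p/2) * I ^ (p/2) *
        ((2:ℝ) ^ (p * (2 - p) / 2) * (a ^ p + b ^ p) ^ ((2 - p)/2)) := by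
        apply mul_le_mul_of_nonneg_left hfac (mul_nonneg hC1 hIp)
    _ = ((p-1)⁻¹) ^ (p/2) * (2:ℝ) ^ (p * (2 - p) / 2) * I ^ (p/2) *
        (a ^ p + b ^ p) ^ ((2 - p)/2) := by ring
end
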